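/- arXiv:2509.08144 — 2 statements merged into one kernel-verified Lean document; each statement's English description precedes it below -/
import Mathlib

section
/- Let M be a matroid with finite ground set and let F be a flat of M. Then F is a modular flat (i.e., for every flat G of M one has M.rk F + M.rk G = M.rk (F ∪ G) + M.rk (F ∩ G)) if and only if for every flat G of M and every flat H of M with H ⊆ F one has M.closure ((F ∩ G) ∪ H) = F ∩ M.closure (G ∪ H). -/
/-!
If `F` is modular, then for flats `G` and `H ⊆ F` the flat `F ∩ cl(G ∪ H)` contains
`cl((F ∩ G) ∪ H)`, and modularity of `F` against `G` and against `cl(G ∪ H)`, together with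
submodularity of `(F ∩ G) ∪ H` against `G`, shows that its rank is no larger.

Conversely, extend a basis of `G` to a basis `B` of `F ∪ G`; the new elements lie in `F`, and
their closure `H` is a flat inside `F` with `F ⊆ cl(G ∪ H)` and `rk H + rk G = rk (F ∪ G)`.
The identity `cl((F ∩ G) ∪ H) = F ∩ cl(G ∪ H) = F` then bounds `rk F` by
`rk (F ∩ G) + rk (F ∪ G) - rk G`, which is the inequality submodularity leaves open.
-/

open Matroid

/-- The rank of a set `X` in a matroid `M`: the largest cardinality of an independent
subset of `X`. -/
noncomputable def Matroid.rk {α : Type*} (M : Matroid α) (X : Set α) : ℕ :=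
  sSup {n : ℕ | ∃ I, M.Indep I ∧ I ⊆ X ∧ I.ncard = n}

open Set

namespace Matroid

variable {α : Type*} {M : Matroid α} {X Y F G H I : Set α}

lemma IsFlat.inter (hF : M.IsFlat F) (hG : M.IsFlat G) : M.IsFlat (F ∩ G) := by
  rw [inter_eq_iInter]
  exact IsFlat.iInter fun b ↦ by cases b <;> assumption

section RankFinite

variable [M.RankFinite]

variable (M) in
lemma cast_rk_eq_eRk (X : Set α) : (M.rk X : ℕ∞) = M.eRk X := by
  obtain ⟨I, hI⟩ := M.exists_isBasis' X
  have hmax : IsGreatest {n : ℕ | ∃ J, M.Indep J ∧ J ⊆ X ∧ J.ncard = n} I.ncard := by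
    refine ⟨⟨I, hI.indep, hI.subset, rfl⟩, ?_⟩
    rintro _ ⟨J, hJ, hJX, rfl⟩
    have hJI : J.encard ≤ I.encard := hI.encard_eq_eRk ▸ hJ.encard_le_eRk_of_subset hJX
    rwa [hJ.finite.cast_ncard_eq.symm, hI.indep.finite.cast_ncard_eq.symm, Nat.cast_le] at hJI
  rw [rk, hmax.csSup_eq, hI.indep.finite.cast_ncard_eq, hI.encard_eq_eRk]

lemma rk_mono (hXY : X ⊆ Y) : M.rk X ≤ M.rk Y := by
  have h := M.eRk_mono hXY
  rwa [← cast_rk_eq_eRk, ← cast_rk_eq_eRk, Nat.cast_le] at h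

lemma rk_closure_eq (X : Set α) : M.rk (M.closure X) = M.rk X := by
  have h := M.eRk_closure_eq X
  rwa [← cast_rk_eq_eRk, ← cast_rk_eq_eRk, Nat.cast_inj] at h

lemma rk_union_closure_right_eq (X Y : Set α) : M.rk (X ∪ M.closure Y) = M.rk (X ∪ Y) := by
  rw [← rk_closure_eq, closure_union_closure_right_eq, rk_closure_eq]

lemma rk_inter_add_rk_union_le (X Y : Set α) :
    M.rk (X ∩ Y) + M.rk (X ∪ Y) ≤ M.rk X + M.rk Y := by
  have h := M.eRk_inter_add_eRk_union_le X Y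
  simp only [← cast_rk_eq_eRk] at h
  exact_mod_cast h

lemma rk_union_le_rk_add_rk (X Y : Set α) : M.rk (X ∪ Y) ≤ M.rk X + M.rk Y := by
  have h := M.eRk_union_le_eRk_add_eRk X Y
  simp only [← cast_rk_eq_eRk] at h
  exact_mod_cast h

lemma IsBasis'.rk_eq_ncard (hI : M.IsBasis' I X) : M.rk X = I.ncard := by
  have h := hI.encard_eq_eRk
  rw [← hI.indep.finite.cast_ncard_eq, ← cast_rk_eq_eRk] at h
  exact_mod_cast h.symm

lemma IsBasis.rk_eq_ncard (hI : M.IsBasis I X) : M.rk X = I.ncard :=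
  hI.isBasis'.rk_eq_ncard

lemma Indep.rk_eq_ncard (hI : M.Indep I) : M.rk I = I.ncard :=
  hI.isBasis_self.rk_eq_ncard

lemma IsFlat.closure_eq_of_subset_of_rk_le (hF : M.IsFlat F) (hXF : X ⊆ F)
    (hrk : M.rk F ≤ M.rk X) : M.closure X = F := by
  refine ((M.isRkFinite_set X).closure_eq_closure_of_subset_of_eRk_ge_eRk hXF ?_).trans hF.closure
  rw [← cast_rk_eq_eRk, ← cast_rk_eq_eRk]
  exact_mod_cast hrk

lemma IsFlat.closure_inter_union_eq_of_modular (hF : M.IsFlat F)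
    (hmod : ∀ G, M.IsFlat G → M.rk F + M.rk G = M.rk (F ∪ G) + M.rk (F ∩ G))
    (hG : M.IsFlat G) (hHF : H ⊆ F) :
    M.closure ((F ∩ G) ∪ H) = F ∩ M.closure (G ∪ H) := by
  have hAF : (F ∩ G) ∪ H ⊆ F := union_subset inter_subset_left hHF
  have hAL : (F ∩ G) ∪ H ⊆ M.closure (G ∪ H) :=
    M.subset_closure_of_subset' (union_subset_union_left H inter_subset_right)
      (union_subset (inter_subset_left.trans hF.subset_ground) (hHF.trans hF.subset_ground))
  refine (hF.inter (M.isFlat_closure _)).closure_eq_of_subset_of_rk_le (subset_inter hAF hAL) ?_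
  set L := M.closure (G ∪ H)
  have hFL : M.rk (F ∪ L) = M.rk (F ∪ G) := by
    rw [rk_union_closure_right_eq, union_comm G H, ← union_assoc, union_eq_self_of_subset_right hHF]
  have hL : M.rk L = M.rk (G ∪ H) := rk_closure_eq _
  have hsub := M.rk_inter_add_rk_union_le ((F ∩ G) ∪ H) G
  have hunion : (F ∩ G) ∪ H ∪ G = G ∪ H := by
    rw [union_right_comm, union_eq_right.2 inter_subset_right, union_comm]
  have hinter : M.rk (F ∩ G) ≤ M.rk (((F ∩ G) ∪ H) ∩ G) :=
    rk_mono (subset_inter subset_union_left inter_subset_right)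
  rw [hunion] at hsub
  have := hmod L (M.isFlat_closure _)
  have := hmod G hG
  omega

lemma IsFlat.exists_isFlat_subset_subset_closure_union (hF : M.IsFlat F) (hG : G ⊆ M.E) :
    ∃ H, M.IsFlat H ∧ H ⊆ F ∧ F ⊆ M.closure (G ∪ H) ∧ M.rk H + M.rk G = M.rk (F ∪ G) := by
  obtain ⟨BG, hBG⟩ := M.exists_isBasis G
  obtain ⟨B, hB, hBGB⟩ := hBG.indep.subset_isBasis_of_subset (hBG.subset.trans subset_union_right)
    (union_subset hF.subset_ground hG)
  have hKF : B \ BG ⊆ F := by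
    rintro x ⟨hxB, hxBG⟩
    refine (hB.subset hxB).resolve_right fun hxG ↦ hxBG ?_
    rw [← hBG.inter_eq_of_subset_indep hBGB hB.indep]
    exact ⟨hxB, hxG⟩
  refine ⟨M.closure (B \ BG), M.isFlat_closure _, ?_, ?_, ?_⟩
  · simpa only [hF.closure] using M.closure_subset_closure hKF
  · calc F ⊆ M.closure (F ∪ G) := M.subset_closure_of_subset subset_union_left
            (union_subset hF.subset_ground hG)
      _ = M.closure B := hB.closure_eq_closure.symm
      _ ⊆ M.closure (G ∪ M.closure (B \ BG)) := by
        rw [closure_union_closure_right_eq]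
        refine M.closure_subset_closure fun x hxB ↦ ?_
        by_cases hxBG : x ∈ BG
        · exact Or.inl (hBG.subset hxBG)
        · exact Or.inr ⟨hxB, hxBG⟩
  · rw [rk_closure_eq, (hB.indep.subset sdiff_subset).rk_eq_ncard, hBG.rk_eq_ncard,
      hB.rk_eq_ncard, ncard_sdiff_add_ncard_of_subset hBGB hB.indep.finite]

lemma IsFlat.rk_add_rk_eq_of_closure_inter_union_eq (hF : M.IsFlat F)
    (hmj : ∀ H, M.IsFlat H → H ⊆ F → M.closure ((F ∩ G) ∪ H) = F ∩ M.closure (G ∪ H))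
    (hG : G ⊆ M.E) : M.rk F + M.rk G = M.rk (F ∪ G) + M.rk (F ∩ G) := by
  obtain ⟨H, hH, hHF, hFGH, hrkH⟩ := hF.exists_isFlat_subset_subset_closure_union hG
  have hFeq : M.closure ((F ∩ G) ∪ H) = F := by rw [hmj H hH hHF, inter_eq_left.2 hFGH]
  have hrkF : M.rk F ≤ M.rk (F ∩ G) + M.rk H :=
    ((congrArg M.rk hFeq).symm.trans (rk_closure_eq _)).trans_le (M.rk_union_le_rk_add_rk _ _)
  have := M.rk_inter_add_rk_union_le F G
  omega

end RankFinite

end Matroid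

/-- A flat `F` of a matroid `M` with finite ground set is modular if and only if for every
flat `G` and every flat `H ⊆ F` one has `(F ∧ G) ∨ H = F ∧ (G ∨ H)` in the lattice of
flats. -/
theorem modular_flat_iff_meet_join' {α : Type*} (M : Matroid α) [M.Finite]
    (F : Set α) (hF : M.IsFlat F) :
    (∀ G : Set α, M.IsFlat G → M.rk F + M.rk G = M.rk (F ∪ G) + M.rk (F ∩ G)) ↔
    (∀ G H : Set α, M.IsFlat G → M.IsFlat H → H ⊆ F →
      M.closure ((F ∩ G) ∪ H) = F ∩ M.closure (G ∪ H)) :=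
  ⟨fun hmod _ _ hG _ hHF ↦ hF.closure_inter_union_eq_of_modular hmod hG hHF,
    fun hmj _ hG ↦ hF.rk_add_rk_eq_of_closure_inter_union_eq
      (fun _ hH hHF ↦ hmj _ _ hG hH hHF) hG.subset_ground⟩
end

section
/- Let ι be a finite type, let c r : ℤ, let f : ι → ℤ → ℤ be a family such that for each ρ there exists N : ℕ with f ρ j = r for all j ≤ -(N : ℤ) and f ρ j = 0 for all j ≥ (N : ℤ), and let a : ι → ℤ satisfy ∑ ρ, a ρ = 0. Then ∑ ρ, c * ∑ᶠ (j : ℤ), j * (f ρ (j - a ρ) - f ρ (j - a ρ + 1)) = ∑ ρ, c * ∑ᶠ (j : ℤ), j * (f ρ j - f ρ (j + 1)). -/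
/-!
Reindexing `j ↦ j + a` turns the degree of the shifted chain into
`deg f + a * ∑ᶠ j, (f j - f (j + 1))`, and this telescoping sum is `r`, the total drop of `f`
from `-∞` to `+∞`. Summed over the rays, the corrections `c * a ρ * r` cancel since `∑ ρ, a ρ = 0`.
-/

open Function Finset

theorem Finset.sum_Ico_sub_add_one {G : Type*} [AddCommGroup G] (f : ℤ → G) {m n : ℤ}
    (hmn : m ≤ n) : ∑ j ∈ Ico m n, (f j - f (j + 1)) = f m - f n := by
  induction n, hmn using Int.leInduction with
  | base => simp
  | succ n hmn ih => rw [← sum_Ico_add_eq_sum_Ico_add_one hmn, ih]; abel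

section
variable {G : Type*} [AddCommGroup G] {f : ℤ → G} {r : G} {N : ℕ}

theorem support_sub_add_one_subset (hbot : ∀ j ≤ -(N : ℤ), f j = r)
    (htop : ∀ j, (N : ℤ) ≤ j → f j = 0) :
    support (fun j ↦ f j - f (j + 1)) ⊆ Ico (-(N : ℤ)) N := by
  intro j hj
  rw [coe_Ico, Set.mem_Ico]
  by_contra hout
  apply hj
  rcases le_or_gt (N : ℤ) j with hN | hN
  · simp only [htop j hN, htop (j + 1) (by omega), sub_zero]
  · simp only [hbot j (by omega), hbot (j + 1) (by omega), sub_self]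

theorem finsum_sub_add_one (hbot : ∀ j ≤ -(N : ℤ), f j = r)
    (htop : ∀ j, (N : ℤ) ≤ j → f j = 0) :
    ∑ᶠ j, (f j - f (j + 1)) = r := by
  rw [finsum_eq_sum_of_support_subset _ (support_sub_add_one_subset hbot htop),
    sum_Ico_sub_add_one f (by omega), hbot _ le_rfl, htop _ le_rfl, sub_zero]

end

theorem finsum_mul_comp_sub {g : ℤ → ℤ} (hg : (support g).Finite) (a : ℤ) :
    ∑ᶠ j, j * g (j - a) = ∑ᶠ j, j * g j + a * ∑ᶠ j, g j := by
  have hjg : (support fun j ↦ j * g j).Finite := hg.subset (support_mul_subset_right _ _)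
  have hag : (support fun j ↦ a * g j).Finite := hg.subset (support_mul_subset_right _ _)
  calc ∑ᶠ j, j * g (j - a) = ∑ᶠ j, (j - a + a) * g (j - a) := by simp only [sub_add_cancel]
    _ = ∑ᶠ j, (j + a) * g j := finsum_comp_equiv (Equiv.subRight a) (f := fun j ↦ (j + a) * g j)
    _ = ∑ᶠ j, j * g j + a * ∑ᶠ j, g j := by
        simp only [add_mul]
        rw [finsum_add_distrib hjg hag, mul_finsum]

theorem finsum_mul_sub_add_one_comp_sub {f : ℤ → ℤ} {r : ℤ} {N : ℕ}
    (hbot : ∀ j ≤ -(N : ℤ), f j = r) (htop : ∀ j, (N : ℤ) ≤ j → f j = 0) (a : ℤ) :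
    ∑ᶠ j, j * (f (j - a) - f (j - a + 1)) = ∑ᶠ j, j * (f j - f (j + 1)) + a * r := by
  have hfin := (finite_toSet _).subset (support_sub_add_one_subset hbot htop)
  rw [finsum_mul_comp_sub (g := fun j ↦ f j - f (j + 1)) hfin, finsum_sub_add_one hbot htop]

/-- If each `f ρ : ℤ → ℤ` is eventually `r` at `-∞` and eventually `0` at `+∞`, and the
shifts `a ρ` sum to zero, then the total (weighted) degree of the shifted family equals
that of the original family. -/
theorem total_degree_shift_invariant {ι : Type*} [Fintype ι] (c r : ℤ) (f : ι → ℤ → ℤ)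
    (hf : ∀ ρ : ι, ∃ N : ℕ,
      (∀ j : ℤ, j ≤ -(N : ℤ) → f ρ j = r) ∧ (∀ j : ℤ, (N : ℤ) ≤ j → f ρ j = 0))
    (a : ι → ℤ) (ha : ∑ ρ, a ρ = 0) :
    ∑ ρ, c * ∑ᶠ j : ℤ, j * (f ρ (j - a ρ) - f ρ (j - a ρ + 1)) =
      ∑ ρ, c * ∑ᶠ j : ℤ, j * (f ρ j - f ρ (j + 1)) := by
  have hshift (ρ : ι) : ∑ᶠ j : ℤ, j * (f ρ (j - a ρ) - f ρ (j - a ρ + 1)) =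
      ∑ᶠ j : ℤ, j * (f ρ j - f ρ (j + 1)) + a ρ * r := by
    obtain ⟨N, hbot, htop⟩ := hf ρ
    exact finsum_mul_sub_add_one_comp_sub hbot htop (a ρ)
  have hcancel : ∑ ρ, c * (a ρ * r) = 0 := by rw [← mul_sum, ← sum_mul, ha, zero_mul, mul_zero]
  simp only [hshift, mul_add, sum_add_distrib, hcancel, add_zero]
end
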